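/- arXiv:math/0502037 — 3 statements merged into one kernel-verified Lean document; each statement's English description precedes it below -/
import Mathlib

section
/- The map Z : P_{n,1} → Z_n associating to each monic degree-n complex polynomial the multiset of its roots (with multiplicity) is a homeomorphism between (P_{n,1}, d_po) and (Z_n, d_F). -/
open Polynomial

/-! Continuity of `Φ` is easy: the coefficients of `∏ (X - C (v j))` are polynomial in `v` and
invariant under reordering `v`. For the root map, fix `p` and an enumeration `u₀` of its roots.
By Cauchy's bound the root vectors of all `q` close to `p` lie in a fixed closed ball. On the
compact part of that ball where `dF u₀ ≥ ε`, the continuous function `v ↦ dpo n p (Φ v)` has no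
zero (a zero would make `v` a reordering of `u₀`), so it is bounded below by some `δ > 0`; hence
`dpo n p q < δ` forces `dF u v < ε`. -/

/-- The distance `d_F` on representatives of `n`-element multisets of complex numbers:
`dF u v = min over permutations σ of (sup metric distance between u and v ∘ σ)`. -/
noncomputable def dF {n : ℕ} (u v : Fin n → ℂ) : ℝ :=
  ⨅ σ : Equiv.Perm (Fin n), dist u (v ∘ σ)

/-- The metric `d_po` on monic complex polynomials of degree `n`: the maximum of the
absolute values of the differences of the coefficients of degree `< n`. -/
noncomputable def dpo (n : ℕ) (f g : Polynomial ℂ) : ℝ :=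
  ⨆ j : Fin n, ‖f.coeff j - g.coeff j‖

lemma Multiset.exists_ofFn_eq {α : Type*} {n : ℕ} (s : Multiset α) (h : Multiset.card s = n) :
    ∃ u : Fin n → α, (↑(List.ofFn u) : Multiset α) = s := by
  obtain ⟨l, rfl⟩ := Quot.exists_rep s
  subst h
  exact ⟨l.get, congrArg _ (List.ofFn_get l)⟩

theorem Equiv.Perm.exists_comp_eq_of_map_univ_eq {ι α : Type*} [Fintype ι] [DecidableEq α]
    {u v : ι → α} (h : Finset.univ.val.map u = Finset.univ.val.map v) :
    ∃ σ : Equiv.Perm ι, v ∘ σ = u := by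
  have hcard (a : α) : Fintype.card {i // u i = a} = Fintype.card {i // v i = a} := by
    simpa [Fintype.card_subtype, Finset.card_def, Multiset.count_map, eq_comm] using
      congrArg (Multiset.count a) h
  exact ⟨Equiv.ofFiberEquiv fun a => Fintype.equivOfCardEq (hcard a),
    funext (Equiv.ofFiberEquiv_map _)⟩

theorem dist_comp_perm {ι E : Type*} [Fintype ι] [PseudoMetricSpace E] (u v : ι → E)
    (σ : Equiv.Perm ι) : dist (u ∘ σ) (v ∘ σ) = dist u v :=
  (IsometryEquiv.piCongrLeft' (Y := fun _ => E) σ.symm).dist_eq u v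

section dF

variable {n : ℕ}

lemma dF_le (u v : Fin n → ℂ) (σ : Equiv.Perm (Fin n)) : dF u v ≤ dist u (v ∘ σ) :=
  ciInf_le (Set.finite_range _).bddBelow σ

lemma exists_dist_lt_of_dF_lt {u v : Fin n → ℂ} {δ : ℝ} (h : dF u v < δ) :
    ∃ σ : Equiv.Perm (Fin n), dist u (v ∘ σ) < δ :=
  exists_lt_of_ciInf_lt h

lemma dF_self (u : Fin n → ℂ) : dF u u = 0 :=
  le_antisymm (by simpa using dF_le u u 1) (le_ciInf fun _ => dist_nonneg)

lemma dF_comp_perm_left (u v : Fin n → ℂ) (ρ : Equiv.Perm (Fin n)) :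
    dF (u ∘ ρ) v = dF u v := by
  rw [dF, dF, ← (Equiv.mulRight ρ).iInf_comp]
  exact iInf_congr fun σ => dist_comp_perm u (v ∘ σ) ρ

lemma dF_eq_of_ofFn_eq {u u' : Fin n → ℂ}
    (h : (↑(List.ofFn u) : Multiset ℂ) = ↑(List.ofFn u')) (v : Fin n → ℂ) :
    dF u v = dF u' v := by
  rw [← Fin.univ_val_map, ← Fin.univ_val_map] at h
  obtain ⟨ρ, rfl⟩ := Equiv.Perm.exists_comp_eq_of_map_univ_eq h
  exact dF_comp_perm_left u' v ρ

lemma continuous_dF (u : Fin n → ℂ) : Continuous (dF u) := by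
  have h : dF u = fun v =>
      (Finset.univ : Finset (Equiv.Perm (Fin n))).inf' Finset.univ_nonempty
        fun σ => dist u (v ∘ σ) :=
    funext fun v => (Finset.inf'_univ_eq_ciInf _).symm
  rw [h]
  exact Continuous.finset_inf'_apply _ fun σ _ => by fun_prop

end dF

def lowCoeffs {R : Type*} [Semiring R] (n : ℕ) (p : R[X]) : Fin n → R := fun j => p.coeff j

lemma dpo_eq_dist (n : ℕ) (f g : ℂ[X]) : dpo n f g = dist (lowCoeffs n f) (lowCoeffs n g) := by
  refine le_antisymm (Real.iSup_le (fun j => ?_) dist_nonneg)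
    ((dist_pi_le_iff (Real.iSup_nonneg fun _ => norm_nonneg _)).2 fun j => ?_)
  · rw [← dist_eq_norm]; exact dist_le_pi_dist (lowCoeffs n f) (lowCoeffs n g) j
  · rw [dist_eq_norm]
    exact le_ciSup (f := fun j : Fin n => ‖f.coeff j - g.coeff j‖) (Set.finite_range _).bddAbove j

lemma Polynomial.Monic.eq_of_lowCoeffs_eq {R : Type*} [Semiring R] {n : ℕ} {p q : R[X]}
    (hp : p.Monic) (hq : q.Monic) (hpn : p.natDegree = n) (hqn : q.natDegree = n)
    (h : lowCoeffs n p = lowCoeffs n q) : p = q := by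
  ext k
  rcases lt_trichotomy k n with hk | rfl | hk
  · exact congrFun h ⟨k, hk⟩
  · rw [← hpn, hp.coeff_natDegree, hpn, ← hqn, hq.coeff_natDegree]
  · rw [coeff_eq_zero_of_natDegree_lt (hpn ▸ hk), coeff_eq_zero_of_natDegree_lt (hqn ▸ hk)]

lemma Polynomial.Monic.norm_lt_of_isRoot {K : Type*} [NormedField K] {p : K[X]} (hp : p.Monic)
    {z : K} (hz : p.IsRoot z) : ‖z‖ < ‖lowCoeffs p.natDegree p‖ + 1 := by
  have h := hz.norm_lt_cauchyBound hp.ne_zero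
  rw [cauchyBound, hp.leadingCoeff, nnnorm_one, div_one, ← Nat.Iio_eq_range,
    ← Fin.map_valEmbedding_univ, Finset.sup_map] at h
  rw [← coe_nnnorm, ← coe_nnnorm, Pi.nnnorm_def]
  exact_mod_cast h

section Continuity

variable {X R : Type*} [TopologicalSpace X] [CommSemiring R] [TopologicalSpace R]
  [IsTopologicalSemiring R]

lemma continuous_coeff_prod {ι : Type*} (s : Finset ι) {f : ι → X → R[X]}
    (hf : ∀ i ∈ s, ∀ k, Continuous fun x => (f i x).coeff k) (k : ℕ) :
    Continuous fun x => (∏ i ∈ s, f i x).coeff k := by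
  simp_rw [← Finset.prod_apply]
  refine Finset.prod_induction f (fun F => ∀ k, Continuous fun x => (F x).coeff k) ?_ ?_ hf k
  · intro F G hF hG k
    simp only [Pi.mul_apply, coeff_mul]
    exact continuous_finsetSum _ fun ij _ => (hF ij.1).mul (hG ij.2)
  · intro k
    exact continuous_const

end Continuity

lemma continuous_coeff_prod_X_sub_C {R ι : Type*} [CommRing R] [TopologicalSpace R]
    [IsTopologicalRing R] (s : Finset ι) (k : ℕ) :
    Continuous fun v : ι → R => (∏ i ∈ s, (X - C (v i))).coeff k := by
  refine continuous_coeff_prod s (fun i _ k => ?_) k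
  simp only [coeff_sub, coeff_C]
  split_ifs <;> fun_prop

lemma continuous_lowCoeffs_prod_X_sub_C {R ι : Type*} [CommRing R] [TopologicalSpace R]
    [IsTopologicalRing R] [Fintype ι] (n : ℕ) :
    Continuous fun v : ι → R => lowCoeffs n (∏ i, (X - C (v i))) :=
  continuous_pi fun j => continuous_coeff_prod_X_sub_C _ j

lemma prod_X_sub_C_eq_multiset_prod {R ι : Type*} [CommRing R] [Fintype ι] (v : ι → R) :
    ∏ i, (X - C (v i)) = ((Finset.univ.val.map v).map fun a => X - C a).prod := by
  rw [Finset.prod_eq_multiset_prod, Multiset.map_map]; rfl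

section Roots

variable {K ι : Type*} [Field K] [Fintype ι]

lemma roots_prod_X_sub_C_eq_map_univ (v : ι → K) :
    (∏ i, (X - C (v i))).roots = Finset.univ.val.map v := by
  rw [prod_X_sub_C_eq_multiset_prod, roots_multiset_prod_X_sub_C]

lemma natDegree_prod_X_sub_C_eq_card (v : ι → K) :
    (∏ i, (X - C (v i))).natDegree = Fintype.card ι := by
  rw [prod_X_sub_C_eq_multiset_prod, natDegree_multiset_prod_X_sub_C_eq_card]
  simp

lemma Polynomial.Monic.eq_prod_X_sub_C_of_roots_eq [IsAlgClosed K] {p : K[X]} (hp : p.Monic)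
    {v : ι → K} (hv : Finset.univ.val.map v = p.roots) : p = ∏ i, (X - C (v i)) := by
  rw [prod_X_sub_C_eq_multiset_prod, hv]
  exact (IsAlgClosed.splits p).eq_prod_roots_of_monic hp

theorem existsUnique_monic_roots_eq [IsAlgClosed K] (V : Multiset K) :
    ∃! p : K[X], p.Monic ∧ p.natDegree = Multiset.card V ∧ p.roots = V :=
  ⟨(V.map fun a => X - C a).prod,
    ⟨monic_multiset_prod_of_monic _ _ fun a _ => monic_X_sub_C a,
      natDegree_multiset_prod_X_sub_C_eq_card V, roots_multiset_prod_X_sub_C V⟩,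
    fun q ⟨hq, _, hqV⟩ => hqV ▸ (IsAlgClosed.splits q).eq_prod_roots_of_monic hq⟩

end Roots

lemma Polynomial.Monic.norm_lt_of_ofFn_eq_roots {K : Type*} [NormedField K] {n : ℕ} {p : K[X]}
    (hp : p.Monic) (hpn : p.natDegree = n) {v : Fin n → K}
    (hv : (↑(List.ofFn v) : Multiset K) = p.roots) : ‖v‖ < ‖lowCoeffs n p‖ + 1 := by
  refine (pi_norm_lt_iff (by positivity)).2 fun j => ?_
  have hj : v j ∈ p.roots := hv ▸ Multiset.mem_coe.2 (List.mem_ofFn.2 ⟨j, rfl⟩)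
  exact hpn ▸ hp.norm_lt_of_isRoot ((mem_roots hp.ne_zero).1 hj)

section Homeomorph

variable {n : ℕ}

theorem exists_dF_lt_of_dpo_lt {p : ℂ[X]} (hp : p.Monic) (hpn : p.natDegree = n)
    {ε : ℝ} (hε : 0 < ε) : ∃ δ > (0 : ℝ), ∀ q : ℂ[X], q.Monic → q.natDegree = n →
      dpo n p q < δ → ∀ u v : Fin n → ℂ, (↑(List.ofFn u) : Multiset ℂ) = p.roots →
        (↑(List.ofFn v) : Multiset ℂ) = q.roots → dF u v < ε := by
  obtain ⟨u₀, hu₀⟩ := p.roots.exists_ofFn_eq <|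
    (splits_iff_card_roots.1 (IsAlgClosed.splits p)).trans hpn
  set R := ‖lowCoeffs n p‖ + 2
  set S := Metric.closedBall 0 R ∩ {v | ε ≤ dF u₀ v}
  have hS : IsCompact S :=
    (isCompact_closedBall 0 R).inter_right (isClosed_le continuous_const (continuous_dF u₀))
  have hcont : Continuous fun v : Fin n → ℂ => dpo n p (∏ i, (X - C (v i))) := by
    simp only [dpo_eq_dist]
    exact continuous_const.dist (continuous_lowCoeffs_prod_X_sub_C n)
  have hpos : ∀ v ∈ S, 0 < dpo n p (∏ i, (X - C (v i))) := by
    rintro v ⟨-, hv : ε ≤ dF u₀ v⟩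
    refine (dpo_eq_dist .. ▸ dist_nonneg).lt_of_ne fun h => hε.not_ge ?_
    have hpv : p = ∏ i, (X - C (v i)) := hp.eq_of_lowCoeffs_eq
      (monic_prod_of_monic _ _ fun i _ => monic_X_sub_C _) hpn
      ((natDegree_prod_X_sub_C_eq_card v).trans (Fintype.card_fin n))
      (dist_eq_zero.1 (dpo_eq_dist .. ▸ h.symm))
    have hroots : (↑(List.ofFn u₀) : Multiset ℂ) = ↑(List.ofFn v) := by
      rw [hu₀, hpv, roots_prod_X_sub_C_eq_map_univ, Fin.univ_val_map]
    rwa [dF_eq_of_ofFn_eq hroots, dF_self] at hv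
  obtain ⟨δ, hδ, hδS⟩ := hS.exists_forall_le' hcont.continuousOn hpos
  refine ⟨min δ 1, lt_min hδ one_pos, fun q hq hqn hpq u v hu hv => ?_⟩
  have hqv : q = ∏ i, (X - C (v i)) := hq.eq_prod_X_sub_C_of_roots_eq (by simpa using hv)
  have hvR : v ∈ Metric.closedBall 0 R := by
    have hv' := hq.norm_lt_of_ofFn_eq_roots hqn hv
    have hpq' := dpo_eq_dist n p q ▸ hpq
    have := norm_le_norm_add_norm_sub' (lowCoeffs n q) (lowCoeffs n p)
    rw [mem_closedBall_zero_iff]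
    linarith [min_le_right δ 1, dist_eq_norm' (lowCoeffs n p) (lowCoeffs n q)]
  rw [dF_eq_of_ofFn_eq (hu.trans hu₀.symm)]
  by_contra! h
  exact (hδS v ⟨hvR, h⟩).not_gt (hqv ▸ hpq.trans_le (min_le_left δ 1))

theorem exists_dpo_lt_of_dF_lt (u : Fin n → ℂ) {ε : ℝ} (hε : 0 < ε) :
    ∃ δ > (0 : ℝ), ∀ v : Fin n → ℂ, dF u v < δ →
      dpo n (∏ j, (X - C (u j))) (∏ j, (X - C (v j))) < ε := by
  obtain ⟨δ, hδ, hu⟩ := Metric.continuous_iff.1 (continuous_lowCoeffs_prod_X_sub_C n) u ε hε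
  refine ⟨δ, hδ, fun v hv => ?_⟩
  obtain ⟨σ, hσ⟩ := exists_dist_lt_of_dF_lt hv
  rw [dpo_eq_dist, ← Equiv.prod_comp σ fun j => X - C (v j), dist_comm]
  exact hu (v ∘ σ) (dist_comm u _ ▸ hσ)

end Homeomorph

theorem stmt13_general (n : ℕ) :
    (∀ V : Multiset ℂ, Multiset.card V = n →
      ∃! p : Polynomial ℂ, p.Monic ∧ p.natDegree = n ∧ p.roots = V) ∧
    (∀ p : Polynomial ℂ, p.Monic → p.natDegree = n → ∀ ε > (0:ℝ), ∃ δ > (0:ℝ),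
      ∀ q : Polynomial ℂ, q.Monic → q.natDegree = n → dpo n p q < δ →
        ∀ u v : Fin n → ℂ,
          (↑(List.ofFn u) : Multiset ℂ) = p.roots →
          (↑(List.ofFn v) : Multiset ℂ) = q.roots → dF u v < ε) ∧
    (∀ u : Fin n → ℂ, ∀ ε > (0:ℝ), ∃ δ > (0:ℝ), ∀ v : Fin n → ℂ, dF u v < δ →
      dpo n (∏ j, (X - C (u j))) (∏ j, (X - C (v j))) < ε) :=
  ⟨fun V hV => hV ▸ existsUnique_monic_roots_eq V,
    fun _ hp hpn _ hε => exists_dF_lt_of_dpo_lt hp hpn hε,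
    fun u _ hε => exists_dpo_lt_of_dF_lt u hε⟩

/-- The root map `Z : P_{n,1} → Z_n` is a homeomorphism between `(P_{n,1}, d_po)`
and `(Z_n, d_F)`: it is a bijection (each `n`-element multiset is the root multiset
of a unique monic degree-`n` polynomial), `Z` is continuous, and its inverse `Φ` is
continuous. -/
theorem stmt13 (n : ℕ) (hn : 1 ≤ n) :
    (∀ V : Multiset ℂ, Multiset.card V = n →
      ∃! p : Polynomial ℂ, p.Monic ∧ p.natDegree = n ∧ p.roots = V) ∧
    (∀ p : Polynomial ℂ, p.Monic → p.natDegree = n → ∀ ε > (0:ℝ), ∃ δ > (0:ℝ),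
      ∀ q : Polynomial ℂ, q.Monic → q.natDegree = n → dpo n p q < δ →
        ∀ u v : Fin n → ℂ,
          (↑(List.ofFn u) : Multiset ℂ) = p.roots →
          (↑(List.ofFn v) : Multiset ℂ) = q.roots → dF u v < ε) ∧
    (∀ u : Fin n → ℂ, ∀ ε > (0:ℝ), ∃ δ > (0:ℝ), ∀ v : Fin n → ℂ, dF u v < δ →
      dpo n (∏ j, (X - C (u j))) (∏ j, (X - C (v j))) < ε) :=
  stmt13_general n
end

section
/- Let K ⊆ ℂⁿ be a set of representatives: for each n-element complex multiset V, K contains exactly one n-tuple whose multiset of coordinates equals V. Let K : Z_n → ℂⁿ be the resulting section of the quotient map P. Then K is continuous (from (Z_n, d_F) to (ℂⁿ, d∞)) if and only if its range K is closed in ℂⁿ. -/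
open Polynomial

/-!
Since `d_F ≤ d∞` and `K` is invariant under permuting coordinates, continuity of `K` for `d_F`
is the same as continuity of `K` on `ℂⁿ`. If `K` is continuous, `𝒦` is its set of fixed points,
hence closed. Conversely, if `𝒦` is closed, then for `w` near `u` every permutation `τ` with
`w ∘ τ ∈ 𝒦` also has `u ∘ τ ∈ 𝒦` (there are finitely many `τ`, and each `u ∘ τ ∉ 𝒦` has an open
neighbourhood outside `𝒦`); so `K w = w ∘ τ` and `K u = u ∘ τ` for the same `τ`, whence
`d∞(K u, K w) ≤ d∞(u, w)`.
-/

open Filter Topology Function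

theorem dist_comp_le_dist {ι ι' α : Type*} [Fintype ι] [Fintype ι'] [PseudoMetricSpace α]
    (u w : ι → α) (f : ι' → ι) : dist (u ∘ f) (w ∘ f) ≤ dist u w :=
  (dist_pi_le_iff dist_nonneg).2 fun i => dist_le_pi_dist u w (f i)

theorem dF_le_dist {n : ℕ} (u v : Fin n → ℂ) : dF u v ≤ dist u v :=
  ciInf_le ⟨0, Set.forall_mem_range.2 fun _ => dist_nonneg⟩ (1 : Equiv.Perm (Fin n))

theorem exists_perm_dist_lt_of_dF_lt {n : ℕ} {u v : Fin n → ℂ} {δ : ℝ} (h : dF u v < δ) :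
    ∃ σ : Equiv.Perm (Fin n), dist u (v ∘ σ) < δ :=
  exists_lt_of_ciInf_lt h

theorem dF_continuous_iff_continuous {n : ℕ} {X : Type*} [PseudoMetricSpace X]
    (f : (Fin n → ℂ) → X) (hf : ∀ u (σ : Equiv.Perm (Fin n)), f (u ∘ σ) = f u) :
    (∀ u : Fin n → ℂ, ∀ ε > (0:ℝ), ∃ δ > (0:ℝ), ∀ v : Fin n → ℂ,
      dF u v < δ → dist (f u) (f v) < ε) ↔ Continuous f := by
  rw [Metric.continuous_iff]
  constructor
  · intro h u ε hε
    obtain ⟨δ, hδ, hclose⟩ := h u ε hε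
    refine ⟨δ, hδ, fun v hv => ?_⟩
    rw [dist_comm] at hv ⊢
    exact hclose v ((dF_le_dist u v).trans_lt hv)
  · intro h u ε hε
    obtain ⟨δ, hδ, hclose⟩ := h u ε hε
    refine ⟨δ, hδ, fun v hv => ?_⟩
    obtain ⟨σ, hσ⟩ := exists_perm_dist_lt_of_dF_lt hv
    rw [← hf v σ, dist_comm]
    exact hclose (v ∘ σ) (by rwa [dist_comm])

theorem eventually_comp_perm_mem_imp {ι X : Type*} [Finite ι] [TopologicalSpace X]
    {𝒦 : Set (ι → X)} (h𝒦 : IsClosed 𝒦) (u : ι → X) :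
    ∀ᶠ w in 𝓝 u, ∀ τ : Equiv.Perm ι, w ∘ τ ∈ 𝒦 → u ∘ τ ∈ 𝒦 := by
  refine eventually_all.2 fun τ => ?_
  by_cases hu : u ∘ τ ∈ 𝒦
  · exact Eventually.of_forall fun _ _ => hu
  · have hτ : Continuous fun w : ι → X => w ∘ τ := continuous_pi fun i => continuous_apply (τ i)
    exact (hτ.continuousAt.eventually (h𝒦.isOpen_compl.mem_nhds hu)).mono
      fun w hw hwτ => absurd hwτ hw

/-- `K` is the section of the quotient map `P : ℂⁿ → Z_n` whose range is the set `𝒦` of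
representatives. -/
structure IsPermSection {ι α : Type*} (𝒦 : Set (ι → α)) (K : (ι → α) → ι → α) : Prop where
  existsUnique : ∀ u, ∃! v, v ∈ 𝒦 ∧ ∃ σ : Equiv.Perm ι, v = u ∘ σ
  spec : ∀ u, K u ∈ 𝒦 ∧ ∃ σ : Equiv.Perm ι, K u = u ∘ σ

namespace IsPermSection

variable {ι α : Type*} {𝒦 : Set (ι → α)} {K : (ι → α) → ι → α}

theorem eq_of_mem (hK : IsPermSection 𝒦 K) {u v : ι → α} {σ : Equiv.Perm ι} (hv : v ∈ 𝒦)
    (hσ : v = u ∘ σ) : K u = v :=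
  (hK.existsUnique u).unique (hK.spec u) ⟨hv, σ, hσ⟩

theorem fixedPoints_eq (hK : IsPermSection 𝒦 K) : fixedPoints K = 𝒦 :=
  Set.ext fun u => ⟨fun hu => hu ▸ (hK.spec u).1, fun hu => hK.eq_of_mem (σ := 1) hu rfl⟩

theorem apply_comp_perm (hK : IsPermSection 𝒦 K) (u : ι → α) (σ : Equiv.Perm ι) :
    K (u ∘ σ) = K u := by
  obtain ⟨τ, hτ⟩ := (hK.spec (u ∘ σ)).2
  exact (hK.eq_of_mem (σ := σ * τ) (hK.spec (u ∘ σ)).1 hτ).symm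

theorem eventually_dist_apply_le [Fintype ι] [PseudoMetricSpace α] (hK : IsPermSection 𝒦 K)
    (h𝒦 : IsClosed 𝒦) (u : ι → α) : ∀ᶠ w in 𝓝 u, dist (K w) (K u) ≤ dist w u := by
  filter_upwards [eventually_comp_perm_mem_imp h𝒦 u] with w hw
  obtain ⟨τ, hτ⟩ := (hK.spec w).2
  rw [hτ, hK.eq_of_mem (hw τ (hτ ▸ (hK.spec w).1)) rfl]
  exact dist_comp_le_dist w u τ

theorem continuous_iff_isClosed [Fintype ι] [MetricSpace α] (hK : IsPermSection 𝒦 K) :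
    Continuous K ↔ IsClosed 𝒦 := by
  refine ⟨fun hcont => hK.fixedPoints_eq ▸ isClosed_fixedPoints hcont, fun h𝒦 => ?_⟩
  refine continuous_iff_continuousAt.2 fun u => ?_
  obtain ⟨r, hr, hle⟩ := Metric.eventually_nhds_iff.1 (hK.eventually_dist_apply_le h𝒦 u)
  exact continuousAt_of_locally_lipschitz hr 1 fun w hw => by simpa using hle hw

end IsPermSection

/-- Let `𝒦 ⊆ ℂⁿ` contain exactly one representative of each `n`-element multiset,
and let `K` be the induced section of the quotient map (so `K u` is the unique
element of `𝒦` that is a permutation of `u`).  Then `K : Z_n → ℂⁿ` is continuous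
(w.r.t. `d_F` and the sup metric) iff `𝒦` is closed in `ℂⁿ`. -/
theorem stmt15 (n : ℕ) (𝒦 : Set (Fin n → ℂ)) (K : (Fin n → ℂ) → (Fin n → ℂ))
    (hrep : ∀ u : Fin n → ℂ, ∃! v, v ∈ 𝒦 ∧ ∃ σ : Equiv.Perm (Fin n), v = u ∘ σ)
    (hK : ∀ u : Fin n → ℂ, K u ∈ 𝒦 ∧ ∃ σ : Equiv.Perm (Fin n), K u = u ∘ σ) :
    (∀ u : Fin n → ℂ, ∀ ε > (0:ℝ), ∃ δ > (0:ℝ), ∀ v : Fin n → ℂ,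
      dF u v < δ → dist (K u) (K v) < ε) ↔ IsClosed 𝒦 :=
  have hsec : IsPermSection 𝒦 K := ⟨hrep, hK⟩
  (dF_continuous_iff_continuous K hsec.apply_comp_perm).trans hsec.continuous_iff_isClosed
end

section
/- For n ≥ 2, no set of representatives K ⊆ ℂⁿ (containing exactly one n-tuple from each fiber of the quotient map P : ℂⁿ → Z_n) is closed in ℂⁿ. -/
open Polynomial

/-!
Follow the tuples `(e^{it}, -e^{it}, 0, …, 0)`, `t ∈ ℝ`. Each of their permutations has the
form `z eᵢ - z eⱼ` with `i ≠ j`, so a set of representatives `K` picks out, for every `t`, a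
unique ordered pair `p t = (i, j)`. If `K` is closed, the fibres of `p` are closed, hence `p` is
locally constant on the connected line, hence constant. But `t ↦ t + π` replaces `e^{it}` by
its negative and so swaps the two entries of `p t`, which is impossible for `i ≠ j`.
-/

theorem IsLocallyConstant.of_isClosed_fiber {X Y : Type*} [TopologicalSpace X] [Finite Y]
    {f : X → Y} (h : ∀ y, IsClosed (f ⁻¹' {y})) : IsLocallyConstant f := fun s => by
  rw [← compl_compl s, Set.preimage_compl, isOpen_compl_iff, ← Set.biUnion_preimage_singleton]
  exact sᶜ.toFinite.isClosed_biUnion fun y _ => h y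

section Dipole

variable {ι M : Type*} [DecidableEq ι] [AddCommGroup M]

def dipole (i j : ι) (z : M) : ι → M := Pi.single i z - Pi.single j z

theorem dipole_neg (i j : ι) (z : M) : dipole i j (-z) = dipole j i z := by
  simp only [dipole, Pi.single_neg]
  abel

theorem continuous_dipole [TopologicalSpace M] [IsTopologicalAddGroup M] (i j : ι) :
    Continuous (dipole i j : M → ι → M) :=
  (continuous_single (A := fun _ => M) i).sub (continuous_single (A := fun _ => M) j)

theorem dipole_comp_perm (i j : ι) (z : M) (σ : Equiv.Perm ι) :
    dipole i j z ∘ σ = dipole (σ.symm i) (σ.symm j) z := by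
  funext k
  simp [dipole, Pi.single_apply, Equiv.eq_symm_apply]

theorem exists_perm_dipole_eq {i j i' j' : ι} (hij : i ≠ j) (hij' : i' ≠ j') (z : M) :
    ∃ σ : Equiv.Perm ι, dipole i j z = dipole i' j' z ∘ σ := by
  obtain ⟨σ, hi, hj⟩ :=
    MulAction.is_two_pretransitive_iff.mp (Equiv.Perm.isMultiplyPretransitive ι 2) hij hij'
  rw [Equiv.Perm.smul_def] at hi hj
  exact ⟨σ, by rw [dipole_comp_perm, ← hi, ← hj, σ.symm_apply_apply, σ.symm_apply_apply]⟩

theorem dipole_inj [IsAddTorsionFree M] {z : M} (hz : z ≠ 0) {i j i' j' : ι} (hij : i ≠ j)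
    (hij' : i' ≠ j') : dipole i j z = dipole i' j' z ↔ i = i' ∧ j = j' := by
  refine ⟨fun h => ?_, by rintro ⟨rfl, rfl⟩; rfl⟩
  have hi := congrFun h i
  have hj := congrFun h j
  have hz' : z ≠ -z := self_ne_neg.mpr hz
  simp only [dipole, Pi.sub_apply, Pi.single_apply] at hi hj
  split_ifs at hi hj <;> simp_all

end Dipole

def IsPermRepresentatives {ι M : Type*} (K : Set (ι → M)) : Prop :=
  ∀ u : ι → M, ∃! v, v ∈ K ∧ ∃ σ : Equiv.Perm ι, v = u ∘ σ

namespace IsPermRepresentatives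

theorem existsUnique_dipole_mem {ι M : Type*} [DecidableEq ι] [Nontrivial ι] [AddCommGroup M]
    [IsAddTorsionFree M] {K : Set (ι → M)} (hK : IsPermRepresentatives K) {z : M}
    (hz : z ≠ 0) : ∃! q : ι × ι, q.1 ≠ q.2 ∧ dipole q.1 q.2 z ∈ K := by
  obtain ⟨i, j, hij⟩ := exists_pair_ne ι
  obtain ⟨v, ⟨hvK, σ, rfl⟩, hv⟩ := hK (dipole i j z)
  rw [dipole_comp_perm] at hvK hv
  refine ⟨(σ.symm i, σ.symm j), ⟨σ.symm.injective.ne hij, hvK⟩, ?_⟩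
  rintro ⟨i', j'⟩ ⟨hij', hK'⟩
  obtain ⟨τ, hτ⟩ := exists_perm_dipole_eq hij' hij z
  have := hv _ ⟨hK', τ, hτ⟩
  rw [dipole_inj hz hij' (σ.symm.injective.ne hij)] at this
  exact Prod.ext this.1 this.2

theorem not_isClosed {ι : Type*} [DecidableEq ι] [Finite ι] [Nontrivial ι] {K : Set (ι → ℂ)}
    (hK : IsPermRepresentatives K) : ¬ IsClosed K := by
  intro hKc
  set e : ℝ → ℂ := fun t => Complex.exp (t * Complex.I)
  have he : ∀ t, e t ≠ 0 := fun t => Complex.exp_ne_zero _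
  have he_pi : ∀ t, e (t + Real.pi) = -e t := fun t => by
    simp only [e, Complex.ofReal_add, add_mul, Complex.exp_add_pi_mul_I]
  choose p hp hp_uniq using fun t => hK.existsUnique_dipole_mem (he t)
  have hp_iff : ∀ t q, p t = q ↔ q.1 ≠ q.2 ∧ dipole q.1 q.2 (e t) ∈ K := fun t q =>
    ⟨fun h => h ▸ hp t, fun h => (hp_uniq t q h).symm⟩
  have hp_const : IsLocallyConstant p := .of_isClosed_fiber fun q => by
    have hfiber : p ⁻¹' {q} = {_t | q.1 ≠ q.2} ∩ (fun t => dipole q.1 q.2 (e t)) ⁻¹' K := by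
      ext t
      exact hp_iff t q
    rw [hfiber]
    exact isClosed_const.inter (hKc.preimage ((continuous_dipole _ _).comp (by fun_prop)))
  have hp_pi : p Real.pi = (p 0).swap := by
    rw [hp_iff, ← zero_add Real.pi, he_pi, dipole_neg]
    exact ⟨(hp 0).1.symm, (hp 0).2⟩
  have hp_swap : p 0 = (p 0).swap := (hp_const.apply_eq_of_preconnectedSpace 0 Real.pi).trans hp_pi
  exact (hp 0).1 (congrArg Prod.fst hp_swap)

end IsPermRepresentatives

/-- For `n ≥ 2`, no set of representatives `𝒦 ⊆ ℂⁿ` (containing exactly one tuple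
from each fiber of the quotient map onto `n`-element multisets) is closed in `ℂⁿ`. -/
theorem stmt16 (n : ℕ) (hn : 2 ≤ n) (𝒦 : Set (Fin n → ℂ))
    (hrep : ∀ u : Fin n → ℂ, ∃! v, v ∈ 𝒦 ∧ ∃ σ : Equiv.Perm (Fin n), v = u ∘ σ) :
    ¬ IsClosed 𝒦 := by
  have : Nontrivial (Fin n) := Fin.nontrivial_iff_two_le.mpr hn
  exact IsPermRepresentatives.not_isClosed hrep
end
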